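/- Every cubic graph whose edge set can be covered by 4 perfect matchings admits a 5-cycle double cover. -/
import Mathlib

noncomputable def edgeDeg {V : Type*} (S : Set (Sym2 V)) (v : V) : ℕ :=
  {e ∈ S | v ∈ e}.ncard

def IsPerfectMatchingOf {V : Type*} (G : SimpleGraph V) (M : Set (Sym2 V)) : Prop :=
  M ⊆ G.edgeSet ∧ ∀ v : V, edgeDeg M v = 1

def IsCycleOf {V : Type*} (G : SimpleGraph V) (C : Set (Sym2 V)) : Prop :=
  C ⊆ G.edgeSet ∧ ∀ v : V, Even (edgeDeg C v)

lemma ncard_symmDiff_parity {α : Type*} (A B : Set α) (hA : A.Finite) (hB : B.Finite) :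
    (symmDiff A B).ncard % 2 = (A.ncard + B.ncard) % 2 := by
  have h1 : (symmDiff A B).ncard + (A ∩ B).ncard = (A ∪ B).ncard := by
    rw [symmDiff_eq_sup_sdiff_inf]
    exact Set.ncard_diff_add_ncard_of_subset (fun x hx => Set.mem_union_left _ hx.1)
      (hA.union hB)
  have h2 := Set.ncard_union_add_ncard_inter A B hA hB
  omega

lemma edgeDeg_symmDiff_parity {V : Type*} [Fintype V] (s t : Set (Sym2 V)) (v : V) :
    edgeDeg (symmDiff s t) v % 2 = (edgeDeg s v + edgeDeg t v) % 2 := by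
  classical
  have hst : {e ∈ symmDiff s t | v ∈ e} = symmDiff {e ∈ s | v ∈ e} {e ∈ t | v ∈ e} := by
    ext e; simp only [Set.mem_setOf_eq, Set.mem_symmDiff, Set.mem_sep_iff]; tauto
  unfold edgeDeg
  rw [hst, ncard_symmDiff_parity _ _ (Set.toFinite _) (Set.toFinite _)]

lemma edgeDeg_edgeSet {V : Type*} [Fintype V] [DecidableEq V] (G : SimpleGraph V)
    [DecidableRel G.Adj] (v : V) : edgeDeg G.edgeSet v = G.degree v := by
  have h : {e ∈ G.edgeSet | v ∈ e} = G.incidenceSet v := rfl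
  unfold edgeDeg
  rw [h, ← SimpleGraph.card_incidenceSet_eq_degree, Set.ncard_eq_toFinset_card',
    Set.toFinset_card]

lemma not_three_matchings {V : Type*} [Fintype V] [DecidableEq V]
    (G : SimpleGraph V) [DecidableRel G.Adj]
    (hcubic : ∀ v : V, G.degree v = 3)
    (M : Fin 4 → Set (Sym2 V))
    (hM : ∀ i, IsPerfectMatchingOf G (M i))
    (hcover : G.edgeSet = ⋃ i : Fin 4, M i)
    (e : Sym2 V) (he : e ∈ G.edgeSet) (i j k : Fin 4)
    (hij : i ≠ j) (hik : i ≠ k) (hjk : j ≠ k)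
    (hi : e ∈ M i) (hj : e ∈ M j) (hk : e ∈ M k) : False := by
  classical
  obtain ⟨v, hv⟩ : ∃ v, v ∈ e := ⟨e.out.1, Sym2.out_fst_mem e⟩
  set I : Finset (Sym2 V) := G.incidenceFinset v with hIdef
  have hIcard : I.card = 3 := by
    rw [hIdef, SimpleGraph.card_incidenceFinset_eq_degree, hcubic]
  have heI : e ∈ I := by
    rw [hIdef, SimpleGraph.mem_incidenceFinset]
    exact ⟨he, hv⟩
  set n : Sym2 V → ℕ := fun f => (Finset.univ.filter (fun i : Fin 4 => f ∈ M i)).card with hn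
  have hsum : ∑ f ∈ I, n f = 4 := by
    have h1 : ∑ f ∈ I, n f = ∑ i : Fin 4, (I.filter (fun f => f ∈ M i)).card := by
      simp only [hn, Finset.card_filter]
      rw [Finset.sum_comm]
    rw [h1]
    have h2 : ∀ i : Fin 4, (I.filter (fun f => f ∈ M i)).card = 1 := by
      intro i
      have hfe : I.filter (fun f => f ∈ M i) = {f ∈ M i | v ∈ f}.toFinset := by
        ext f
        simp only [Finset.mem_filter, hIdef, SimpleGraph.mem_incidenceFinset,
          SimpleGraph.incidenceSet, Set.mem_toFinset, Set.mem_sep_iff]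
        constructor
        · rintro ⟨⟨_, hvf⟩, hf⟩; exact ⟨hf, hvf⟩
        · rintro ⟨hf, hvf⟩; exact ⟨⟨(hM i).1 hf, hvf⟩, hf⟩
      rw [hfe, ← Set.ncard_eq_toFinset_card']
      exact (hM i).2 v
    simp [h2]
  have hone : ∀ f ∈ I, 1 ≤ n f := by
    intro f hf
    have hfE : f ∈ G.edgeSet := by
      rw [hIdef, SimpleGraph.mem_incidenceFinset] at hf
      exact hf.1
    rw [hcover, Set.mem_iUnion] at hfE
    obtain ⟨i, hfi⟩ := hfE
    have : i ∈ Finset.univ.filter (fun j : Fin 4 => f ∈ M j) := by simp [hfi]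
    exact Finset.card_pos.mpr ⟨i, this⟩
  have hthree : 3 ≤ n e := by
    have hsub : ({i, j, k} : Finset (Fin 4)) ⊆ Finset.univ.filter (fun l : Fin 4 => e ∈ M l) := by
      intro l hl
      simp only [Finset.mem_insert, Finset.mem_singleton] at hl
      rcases hl with rfl | rfl | rfl <;> simp [hi, hj, hk]
    have hcard3 : ({i, j, k} : Finset (Fin 4)).card = 3 := by
      rw [Finset.card_insert_of_notMem (by simp [hij, hik]),
        Finset.card_insert_of_notMem (by simp [hjk]), Finset.card_singleton]
    calc 3 = ({i, j, k} : Finset (Fin 4)).card := hcard3.symm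
    _ ≤ _ := Finset.card_le_card hsub
  have hrest : 2 ≤ ∑ f ∈ I.erase e, n f := by
    calc 2 = (I.erase e).card := by rw [Finset.card_erase_of_mem heI, hIcard]
    _ = ∑ f ∈ I.erase e, 1 := by simp
    _ ≤ ∑ f ∈ I.erase e, n f :=
        Finset.sum_le_sum (fun f hf => hone f (Finset.mem_of_mem_erase hf))
  have := Finset.add_sum_erase I n heI
  omega

/-- Every cubic graph whose edge set is covered by 4 perfect matchings
admits a 5-cycle double cover. -/
theorem excessive_four_gives_cdc5 {V : Type*} [Fintype V] [DecidableEq V]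
    (G : SimpleGraph V) [DecidableRel G.Adj]
    (hcubic : ∀ v : V, G.degree v = 3)
    (M : Fin 4 → Set (Sym2 V))
    (hM : ∀ i, IsPerfectMatchingOf G (M i))
    (hcover : G.edgeSet = ⋃ i : Fin 4, M i) :
    ∃ C : Fin 5 → Set (Sym2 V), (∀ i, IsCycleOf G (C i)) ∧
      ∀ e ∈ G.edgeSet, Nat.card {i : Fin 5 // e ∈ C i} = 2 := by
  classical
  have hsub2 : ∀ A B : Set (Sym2 V), A ⊆ G.edgeSet → B ⊆ G.edgeSet →
      symmDiff A B ⊆ G.edgeSet := fun A B hA hB =>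
    le_trans symmDiff_le_sup (sup_le hA hB)
  refine ⟨![symmDiff (symmDiff (symmDiff G.edgeSet (M 1)) (M 2)) (M 3),
            symmDiff (symmDiff (symmDiff G.edgeSet (M 0)) (M 2)) (M 3),
            symmDiff (symmDiff (symmDiff G.edgeSet (M 0)) (M 1)) (M 3),
            symmDiff (symmDiff (symmDiff G.edgeSet (M 0)) (M 1)) (M 2),
            symmDiff (symmDiff (symmDiff (M 0) (M 1)) (M 2)) (M 3)], ?_, ?_⟩
  · -- each is a cycle
    have hsub : ∀ A B C D : Set (Sym2 V), A ⊆ G.edgeSet → B ⊆ G.edgeSet →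
        C ⊆ G.edgeSet → D ⊆ G.edgeSet →
        symmDiff (symmDiff (symmDiff A B) C) D ⊆ G.edgeSet := fun A B C D hA hB hC hD =>
      hsub2 _ _ (hsub2 _ _ (hsub2 _ _ hA hB) hC) hD
    have hEdeg : ∀ v, edgeDeg G.edgeSet v = 3 := by
      intro v; rw [edgeDeg_edgeSet, hcubic]
    have heven : ∀ (A B C D : Set (Sym2 V)) (v : V),
        (edgeDeg A v + edgeDeg B v + edgeDeg C v + edgeDeg D v) % 2 = 0 →
        Even (edgeDeg (symmDiff (symmDiff (symmDiff A B) C) D) v) := by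
      intro A B C D v h
      have p1 := edgeDeg_symmDiff_parity (symmDiff (symmDiff A B) C) D v
      have p2 := edgeDeg_symmDiff_parity (symmDiff A B) C v
      have p3 := edgeDeg_symmDiff_parity A B v
      rw [Nat.even_iff]
      omega
    intro i
    fin_cases i <;>
      refine ⟨hsub _ _ _ _ (by first | exact fun _ h => h | exact (hM _).1)
        (by first | exact fun _ h => h | exact (hM _).1) (hM _).1 (hM _).1, fun v => ?_⟩ <;>
      apply heven <;>
      simp [hEdeg, (hM 0).2 v, (hM 1).2 v, (hM 2).2 v, (hM 3).2 v]
  · -- double cover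
    intro e he
    have hex : ∃ i, e ∈ M i := by
      rw [hcover, Set.mem_iUnion] at he; exact he
    have htri := not_three_matchings G hcubic M hM hcover e (by rwa [hcover, Set.mem_iUnion])
    have heE : e ∈ G.edgeSet := he
    by_cases h0 : e ∈ M 0 <;> by_cases h1 : e ∈ M 1 <;>
      by_cases h2 : e ∈ M 2 <;> by_cases h3 : e ∈ M 3
    all_goals first
      | exact (htri 0 1 2 (by decide) (by decide) (by decide) h0 h1 h2).elim
      | exact (htri 0 1 3 (by decide) (by decide) (by decide) h0 h1 h3).elim
      | exact (htri 0 2 3 (by decide) (by decide) (by decide) h0 h2 h3).elim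
      | exact (htri 1 2 3 (by decide) (by decide) (by decide) h1 h2 h3).elim
      | (obtain ⟨i, hi⟩ := hex; fin_cases i <;> contradiction)
      | (rw [Nat.card_eq_fintype_card, Fintype.card_subtype, Finset.card_filter,
          Fin.sum_univ_five];
         simp [Set.mem_symmDiff, heE, h0, h1, h2, h3])
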